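/- In the E6 configuration of 36 projective lines there are exactly 135 sets of 4 mutually orthogonal lines and no sets of 5 mutually orthogonal lines; in particular the E6 configuration is not saturated. -/

import Mathlib

/-- Vectors `(x; y; z) ∈ ℝ⁹` written as three blocks of three coordinates. -/
abbrev V9 : Type := Fin 3 → Fin 3 → ℝ

/-- The vector with blocks `a`, `b`, `c`. -/
def blk (a b c : Fin 3 → ℝ) : V9 := ![a, b, c]

/-- The standard inner product on `ℝ⁹`. -/
def dot9 (v w : V9) : ℝ := ∑ b, ∑ p, v b p * w b p

/-- The projective line (ray) spanned by a vector. -/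
def ray9 (v : V9) : Submodule ℝ V9 := Submodule.span ℝ {v}

/-- Orthogonality of subspaces of `ℝ⁹`. -/
def Perp9 (L M : Submodule ℝ V9) : Prop := ∀ x ∈ L, ∀ y ∈ M, dot9 x y = 0

/-- The three vectors `(1,−1,0)`, `(1,0,−1)`, `(0,1,−1)`. -/
def xis : Set (Fin 3 → ℝ) := {![1, -1, 0], ![1, 0, -1], ![0, 1, -1]}

/-- The three vectors `(2,−1,−1)`, `(−1,2,−1)`, `(−1,−1,2)`. -/
def etas : Set (Fin 3 → ℝ) := {![2, -1, -1], ![-1, 2, -1], ![-1, -1, 2]}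

/-- The 72 roots of `E6`, modeled in the subspace
`R = {(x;y;z) : Σxᵢ = Σyⱼ = Σzₖ = 0}` of `ℝ⁹`: the 9 vectors `(ξ;0;0)`, `(0;ξ;0)`,
`(0;0;ξ)` with `ξ ∈ xis`, the 27 vectors `(1/3)(ξ;η;ζ)` with `ξ,η,ζ ∈ etas`, and the
negatives of all of these. -/
def E6roots : Set V9 :=
  {v | ∃ w : V9, (v = w ∨ v = -w) ∧
    ((∃ ξ ∈ xis, w = blk ξ 0 0 ∨ w = blk 0 ξ 0 ∨ w = blk 0 0 ξ) ∨
     (∃ ξ ∈ etas, ∃ η ∈ etas, ∃ ζ ∈ etas, w = ((1 : ℝ) / 3) • blk ξ η ζ))}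

/-- The 36 projective lines of the `E6` configuration. -/
def E6lines : Set (Submodule ℝ V9) := ray9 '' E6roots

/-!
Each of the 36 lines is spanned by an integer vector, so orthogonality of two lines is the
vanishing of an integer dot product, and distinct lines have non-proportional representatives
(strict Cauchy–Schwarz). Sets of mutually orthogonal lines are therefore exactly the cliques of
a graph on 36 vertices, and its 4- and 5-cliques are counted by a computation the kernel can
check. Since there are no five mutually orthogonal lines, the empty set does not extend to six.
-/

open Finset

namespace SimpleGraph

variable {α β : Type*}

theorem isClique_iff_pairwise_image {G : SimpleGraph α} {f : α → β} {R : β → β → Prop}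
    (hf : Function.Injective f) (hG : ∀ x y, G.Adj x y ↔ x ≠ y ∧ R (f x) (f y)) (t : Set α) :
    G.IsClique t ↔ (f '' t).Pairwise R := by
  rw [hf.injOn.pairwise_image, IsClique]
  simp only [Set.Pairwise, hG, Function.onFun, imp_and, imp_self, true_and]

section Count

variable (G : SimpleGraph α) [DecidableRel G.Adj]

/-- Search that extends cliques only by common neighbours; unlike filtering `powersetCard`,
it is cheap enough for the kernel to evaluate on 36 vertices. -/
def countCliquesIn : ℕ → List α → ℕ
  | 0, _ => 1
  | n + 1, l => (l.tails.map fun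
      | [] => 0
      | a :: t => countCliquesIn n (t.filter (G.Adj a ·))).sum

@[simp]
lemma countCliquesIn_zero (l : List α) : G.countCliquesIn 0 l = 1 := rfl

lemma countCliquesIn_succ_cons (n : ℕ) (a : α) (l : List α) :
    G.countCliquesIn (n + 1) (a :: l) =
      G.countCliquesIn (n + 1) l + G.countCliquesIn n (l.filter (G.Adj a ·)) := by
  simp [countCliquesIn, add_comm]

variable [DecidableEq α]

def cliqueFinsetIn (s : Finset α) (n : ℕ) : Finset (Finset α) :=
  (s.powersetCard n).filter fun T => G.IsClique (T : Set α)

@[simp]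
lemma mem_cliqueFinsetIn {s T : Finset α} {n : ℕ} :
    T ∈ G.cliqueFinsetIn s n ↔ T ⊆ s ∧ #T = n ∧ G.IsClique (T : Set α) := by
  simp [cliqueFinsetIn, and_assoc]

lemma cliqueFinsetIn_insert_succ {a : α} {s : Finset α} (ha : a ∉ s) (n : ℕ) :
    G.cliqueFinsetIn (insert a s) (n + 1) =
      G.cliqueFinsetIn s (n + 1) ∪ (G.cliqueFinsetIn {b ∈ s | G.Adj a b} n).image (insert a) := by
  rw [cliqueFinsetIn, powersetCard_succ_insert ha, filter_union, filter_image]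
  congr 2
  ext T
  simp only [mem_filter, mem_powersetCard, mem_cliqueFinsetIn, coe_insert, isClique_insert,
    subset_iff]
  constructor
  · rintro ⟨⟨hTs, hcard⟩, hT, hadj⟩
    exact ⟨fun b hb => ⟨hTs hb, hadj b hb (fun h => ha (h ▸ hTs hb))⟩, hcard, hT⟩
  · rintro ⟨hTs, hcard, hT⟩
    exact ⟨⟨fun b hb => (hTs hb).1, hcard⟩, hT, fun b hb _ => (hTs hb).2⟩

lemma card_cliqueFinsetIn_insert_succ {a : α} {s : Finset α} (ha : a ∉ s) (n : ℕ) :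
    #(G.cliqueFinsetIn (insert a s) (n + 1)) =
      #(G.cliqueFinsetIn s (n + 1)) + #(G.cliqueFinsetIn {b ∈ s | G.Adj a b} n) := by
  have hnotMem : ∀ T ∈ G.cliqueFinsetIn {b ∈ s | G.Adj a b} n, a ∉ T := fun T hT haT =>
    ha (mem_filter.mp (((mem_cliqueFinsetIn G).mp hT).1 haT)).1
  rw [cliqueFinsetIn_insert_succ G ha, card_union_of_disjoint, card_image_of_injOn]
  · intro T hT U hU h
    rw [← erase_insert (hnotMem T hT), ← erase_insert (hnotMem U hU), h]
  · refine Finset.disjoint_left.mpr fun T hT hT' => ?_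
    obtain ⟨U, -, rfl⟩ := mem_image.mp hT'
    exact ha (((mem_cliqueFinsetIn G).mp hT).1 (mem_insert_self a U))

theorem countCliquesIn_eq_card {l : List α} (hl : l.Nodup) (n : ℕ) :
    G.countCliquesIn n l = #(G.cliqueFinsetIn l.toFinset n) := by
  induction n generalizing l with
  | zero => simp [cliqueFinsetIn, filter_singleton]
  | succ n ihn =>
    induction l with
    | nil => rw [List.toFinset_nil, cliqueFinsetIn, powersetCard_eq_empty.mpr (by simp)]; rfl
    | cons a l ihl =>
      obtain ⟨ha, hl⟩ := List.nodup_cons.mp hl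
      rw [countCliquesIn_succ_cons, List.toFinset_cons,
        card_cliqueFinsetIn_insert_succ G (by simpa using ha), ihl hl,
        ihn (hl.filter _), List.toFinset_filter]
      simp

theorem card_cliqueFinset_eq_countCliquesIn [Fintype α] {l : List α} (hl : l.Nodup)
    (hmem : ∀ x, x ∈ l) (n : ℕ) : #(G.cliqueFinset n) = G.countCliquesIn n l := by
  rw [countCliquesIn_eq_card G hl]
  congr 1
  ext T
  simp [hmem, isNClique_iff, and_comm, subset_iff]

end Count

theorem setOf_pairwise_subset_range_eq_image [Fintype α] [DecidableEq α] {G : SimpleGraph α}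
    [DecidableRel G.Adj] {f : α → β} {R : β → β → Prop} (hf : Function.Injective f)
    (hG : ∀ x y, G.Adj x y ↔ x ≠ y ∧ R (f x) (f y)) (n : ℕ) :
    {S | S ⊆ Set.range f ∧ S.ncard = n ∧ S.Pairwise R} =
      (fun T : Finset α => f '' T) '' G.cliqueFinset n := by
  ext S
  simp only [Set.mem_ofPred_eq, Set.mem_image, Finset.mem_coe, mem_cliqueFinset_iff,
    isNClique_iff, isClique_iff_pairwise_image hf hG]
  constructor
  · rintro ⟨hS, rfl, hR⟩
    obtain ⟨t, rfl⟩ := Set.subset_range_iff_exists_image_eq.mp hS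
    obtain ⟨T, rfl⟩ := t.toFinite.exists_finset_coe
    exact ⟨T, ⟨hR, by rw [Set.ncard_image_of_injective _ hf, Set.ncard_coe_finset]⟩, rfl⟩
  · rintro ⟨T, ⟨hR, rfl⟩, rfl⟩
    exact ⟨Set.image_subset_range f T, by rw [Set.ncard_image_of_injective _ hf,
      Set.ncard_coe_finset], hR⟩

end SimpleGraph

lemma dot9_comm (v w : V9) : dot9 v w = dot9 w v := by
  simp only [dot9, mul_comm]

lemma dot9_smul_left (c : ℝ) (v w : V9) : dot9 (c • v) w = c * dot9 v w := by
  simp only [dot9, Pi.smul_apply, smul_eq_mul, Finset.mul_sum, mul_assoc]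

lemma dot9_smul_right (c : ℝ) (v w : V9) : dot9 v (c • w) = c * dot9 v w := by
  rw [dot9_comm, dot9_smul_left, dot9_comm]

theorem perp9_ray9_iff {v w : V9} : Perp9 (ray9 v) (ray9 w) ↔ dot9 v w = 0 := by
  refine ⟨fun h => h v (Submodule.mem_span_singleton_self v) w
    (Submodule.mem_span_singleton_self w), fun h x hx y hy => ?_⟩
  obtain ⟨a, rfl⟩ := Submodule.mem_span_singleton.mp hx
  obtain ⟨b, rfl⟩ := Submodule.mem_span_singleton.mp hy
  rw [dot9_smul_left, dot9_smul_right, h, mul_zero, mul_zero]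

theorem ray9_smul {c : ℝ} (hc : c ≠ 0) (v : V9) : ray9 (c • v) = ray9 v :=
  Submodule.span_singleton_smul_eq (isUnit_iff_ne_zero.mpr hc) v

theorem ray9_neg (v : V9) : ray9 (-v) = ray9 v := by
  simpa using ray9_smul (neg_ne_zero.mpr one_ne_zero) v

theorem sq_dot9_eq_of_ray9_eq {v w : V9} (h : ray9 v = ray9 w) :
    dot9 v w ^ 2 = dot9 v v * dot9 w w := by
  obtain ⟨c, rfl⟩ := Submodule.mem_span_singleton.mp
    (h ▸ Submodule.mem_span_singleton_self w : w ∈ ray9 v)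
  simp only [dot9_smul_left, dot9_smul_right]
  ring

namespace E6

def xiZ : Fin 3 → Fin 3 → ℤ := ![![1, -1, 0], ![1, 0, -1], ![0, 1, -1]]

def etaZ : Fin 3 → Fin 3 → ℤ := ![![2, -1, -1], ![-1, 2, -1], ![-1, -1, 2]]

abbrev Index : Type := Fin 3 × Fin 3 ⊕ Fin 3 × Fin 3 × Fin 3

/-- `.inl (b, k)` is `ξ_k` in block `b`; `.inr (i, j, k)` is three times the root
`(1/3)(η_i; η_j; η_k)`, so that all representatives are integral. -/
def rootZ : Index → Fin 3 → Fin 3 → ℤ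
  | .inl (b, k) => Pi.single b (xiZ k)
  | .inr (i, j, k) => ![etaZ i, etaZ j, etaZ k]

def dotZ (v w : Fin 3 → Fin 3 → ℤ) : ℤ := ∑ b, ∑ p, v b p * w b p

def root (x : Index) : V9 := fun b => Int.cast ∘ rootZ x b

def line (x : Index) : Submodule ℝ V9 := ray9 (root x)

lemma dot9_root (x y : Index) : dot9 (root x) (root y) = dotZ (rootZ x) (rootZ y) := by
  simp [dot9, dotZ, root]

def orthGraph : SimpleGraph Index where
  Adj x y := x ≠ y ∧ dotZ (rootZ x) (rootZ y) = 0
  symm := ⟨fun _ _ h => ⟨h.1.symm, by simpa only [dotZ, mul_comm] using h.2⟩⟩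
  loopless := ⟨fun _ h => h.1 rfl⟩

instance : DecidableRel orthGraph.Adj :=
  fun x y => inferInstanceAs (Decidable (x ≠ y ∧ dotZ (rootZ x) (rootZ y) = 0))

lemma orthGraph_adj_iff (x y : Index) :
    orthGraph.Adj x y ↔ x ≠ y ∧ Perp9 (line x) (line y) := by
  rw [line, line, perp9_ray9_iff, dot9_root, Int.cast_eq_zero]
  rfl

lemma eq_of_sq_dotZ_eq : ∀ x y : Index,
    dotZ (rootZ x) (rootZ y) ^ 2 = dotZ (rootZ x) (rootZ x) * dotZ (rootZ y) (rootZ y) →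
      x = y := by
  decide +kernel

lemma line_injective : Function.Injective line := fun x y h => by
  have hsq := sq_dot9_eq_of_ray9_eq h
  simp only [dot9_root] at hsq
  exact eq_of_sq_dotZ_eq x y (by exact_mod_cast hsq)

lemma xis_eq_range : xis = Set.range fun k => Int.cast ∘ xiZ k := by
  ext v
  simp [xis, xiZ, Fin.exists_fin_succ, eq_comm, funext_iff, Fin.forall_fin_succ]

lemma etas_eq_range : etas = Set.range fun k => Int.cast ∘ etaZ k := by
  ext v
  simp [etas, etaZ, Fin.exists_fin_succ, eq_comm, funext_iff, Fin.forall_fin_succ]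

lemma eq_blk_or_iff_exists_eq_single (w : V9) (ξ : Fin 3 → ℝ) :
    (w = blk ξ 0 0 ∨ w = blk 0 ξ 0 ∨ w = blk 0 0 ξ) ↔ ∃ b, w = Pi.single b ξ := by
  simp [Fin.exists_fin_succ, blk, funext_iff (f := w), Fin.forall_fin_succ, Pi.single_apply]

lemma mem_E6lines_iff {L : Submodule ℝ V9} :
    L ∈ E6lines ↔ (∃ ξ ∈ xis, ∃ b, L = ray9 (Pi.single b ξ)) ∨
      ∃ ξ ∈ etas, ∃ η ∈ etas, ∃ ζ ∈ etas, L = ray9 (blk ξ η ζ) := by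
  constructor
  · rintro ⟨v, ⟨w, hvw, hw⟩, rfl⟩
    obtain rfl | rfl := hvw
    all_goals
      try rw [ray9_neg]
      rcases hw with ⟨ξ, hξ, hw⟩ | ⟨ξ, hξ, η, hη, ζ, hζ, rfl⟩
      · obtain ⟨b, rfl⟩ := (eq_blk_or_iff_exists_eq_single _ ξ).mp hw
        exact Or.inl ⟨ξ, hξ, b, rfl⟩
      · exact Or.inr ⟨ξ, hξ, η, hη, ζ, hζ, ray9_smul (by norm_num) _⟩
  · rintro (⟨ξ, hξ, b, rfl⟩ | ⟨ξ, hξ, η, hη, ζ, hζ, rfl⟩)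
    · exact ⟨_, ⟨_, Or.inl rfl,
        Or.inl ⟨ξ, hξ, (eq_blk_or_iff_exists_eq_single _ ξ).mpr ⟨b, rfl⟩⟩⟩, rfl⟩
    · exact ⟨_, ⟨_, Or.inl rfl, Or.inr ⟨ξ, hξ, η, hη, ζ, hζ, rfl⟩⟩, ray9_smul (by norm_num) _⟩

lemma root_inl (b k : Fin 3) : root (.inl (b, k)) = Pi.single b (Int.cast ∘ xiZ k) := by
  ext b' p
  by_cases h : b' = b
  · subst h
    simp [root, rootZ]
  · simp [root, rootZ, h]

lemma root_inr (i j k : Fin 3) :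
    root (.inr (i, j, k)) = blk (Int.cast ∘ etaZ i) (Int.cast ∘ etaZ j) (Int.cast ∘ etaZ k) := by
  ext b p
  fin_cases b <;> rfl

theorem range_line : Set.range line = E6lines := by
  ext L
  simp only [mem_E6lines_iff, xis_eq_range, etas_eq_range, Set.exists_range_iff]
  constructor
  · rintro ⟨⟨b, k⟩ | ⟨i, j, k⟩, rfl⟩
    · exact Or.inl ⟨k, b, by rw [line, root_inl]⟩
    · exact Or.inr ⟨i, j, k, by rw [line, root_inr]⟩
  · rintro (⟨k, b, rfl⟩ | ⟨i, j, k, rfl⟩)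
    · exact ⟨.inl (b, k), by rw [line, root_inl]⟩
    · exact ⟨.inr (i, j, k), by rw [line, root_inr]⟩

theorem setOf_pairwise_perp9_eq_image (n : ℕ) :
    {S | S ⊆ E6lines ∧ S.ncard = n ∧ S.Pairwise Perp9} =
      (fun T : Finset Index => line '' T) '' orthGraph.cliqueFinset n := by
  rw [← range_line]
  exact SimpleGraph.setOf_pairwise_subset_range_eq_image line_injective orthGraph_adj_iff n

def indexList : List Index :=
  (List.finRange 3 ×ˢ List.finRange 3).map Sum.inl ++
    (List.finRange 3 ×ˢ List.finRange 3 ×ˢ List.finRange 3).map Sum.inr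

lemma nodup_indexList : indexList.Nodup := by decide +kernel

lemma mem_indexList (x : Index) : x ∈ indexList := by
  rcases x with ⟨b, k⟩ | ⟨i, j, k⟩ <;> simp [indexList]

theorem card_orthGraph_cliqueFinset_four : #(orthGraph.cliqueFinset 4) = 135 := by
  rw [orthGraph.card_cliqueFinset_eq_countCliquesIn nodup_indexList mem_indexList]
  decide +kernel

theorem orthGraph_cliqueFree_five : orthGraph.CliqueFree 5 := by
  rw [← SimpleGraph.cliqueFinset_eq_empty_iff, ← card_eq_zero,
    orthGraph.card_cliqueFinset_eq_countCliquesIn nodup_indexList mem_indexList]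
  decide +kernel

end E6

/-- the `E6` configuration contains exactly 135 sets of 4 mutually
orthogonal lines, no sets of 5 mutually orthogonal lines, and in particular is not
saturated (as a configuration in the 6-dimensional space `R`). -/
theorem stmt_13 :
    {S : Set (Submodule ℝ V9) | S ⊆ E6lines ∧ S.ncard = 4 ∧ S.Pairwise Perp9}.ncard
        = 135 ∧
    (¬ ∃ S : Set (Submodule ℝ V9),
        S ⊆ E6lines ∧ S.ncard = 5 ∧ S.Pairwise Perp9) ∧
    ¬ (∀ U ⊆ E6lines, U.Pairwise Perp9 →
        ∃ M, U ⊆ M ∧ M ⊆ E6lines ∧ M.ncard = 6 ∧ M.Pairwise Perp9) := by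
  have hno5 : ¬ ∃ S : Set (Submodule ℝ V9), S ⊆ E6lines ∧ S.ncard = 5 ∧ S.Pairwise Perp9 := by
    rintro ⟨S, hS⟩
    have hmem : S ∈ {S | S ⊆ E6lines ∧ S.ncard = 5 ∧ S.Pairwise Perp9} := hS
    simp [E6.setOf_pairwise_perp9_eq_image, E6.orthGraph_cliqueFree_five.cliqueFinset] at hmem
  refine ⟨?_, hno5, fun hsat => ?_⟩
  · have hinj : Function.Injective fun T : Finset E6.Index => E6.line '' T :=
      fun T U h => Finset.coe_injective (Set.image_injective.mpr E6.line_injective h)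
    rw [E6.setOf_pairwise_perp9_eq_image, Set.ncard_image_of_injective _ hinj,
      Set.ncard_coe_finset, E6.card_orthGraph_cliqueFinset_four]
  · obtain ⟨M, -, hME, hM6, hMP⟩ := hsat ∅ (Set.empty_subset _) (Set.pairwise_empty _)
    obtain ⟨S, hSM, hS5⟩ := Set.exists_subset_card_eq (show 5 ≤ M.ncard by omega)
    exact hno5 ⟨S, hSM.trans hME, hS5, hMP.mono hSM⟩
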